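/- Let A, B, X, Y be finitely-valued random variables on Ω and ε ≥ 0 a real number. Assume: (i) A is independent of the pair (B, X); (ii) X and Y are conditionally independent given the pair (A, B); and (iii) I(B ; X) ≤ ε. Then I(A ; X | Y) ≤ ε. -/

import Mathlib

open MeasureTheory ProbabilityTheory

/-- Shannon entropy of a finitely-valued random variable `X` under `μ`. -/
noncomputable def finEntropy {Ω : Type*} [MeasurableSpace Ω] (μ : Measure Ω)
    {S : Type*} [Fintype S] (X : Ω → S) : ℝ :=
  ∑ s : S, Real.negMulLog ((μ (X ⁻¹' {s})).toReal)

/-- Mutual information `I(X ; Y)` of finitely-valued random variables under `μ`. -/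
noncomputable def finMutualInfo {Ω : Type*} [MeasurableSpace Ω] (μ : Measure Ω)
    {S T : Type*} [Fintype S] [Fintype T] (X : Ω → S) (Y : Ω → T) : ℝ :=
  finEntropy μ X + finEntropy μ Y - finEntropy μ (fun ω => (X ω, Y ω))

/-- Conditional mutual information `I(X ; Y | Z)` of finitely-valued random
variables under `μ`. -/
noncomputable def finCondMutualInfo {Ω : Type*} [MeasurableSpace Ω] (μ : Measure Ω)
    {S T U : Type*} [Fintype S] [Fintype T] [Fintype U]
    (X : Ω → S) (Y : Ω → T) (Z : Ω → U) : ℝ :=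
  finEntropy μ (fun ω => (X ω, Z ω)) + finEntropy μ (fun ω => (Y ω, Z ω))
    - finEntropy μ (fun ω => (X ω, Y ω, Z ω)) - finEntropy μ Z

/-- `X` and `Y` are conditionally independent given `Z` (for finitely-valued
random variables this pointwise product formula is the usual definition). -/
def CondIndepFinRV {Ω : Type*} [MeasurableSpace Ω] (μ : Measure Ω)
    {S T U : Type*} (X : Ω → S) (Y : Ω → T) (Z : Ω → U) : Prop :=
  ∀ (s : S) (t : T) (u : U),
    μ (X ⁻¹' {s} ∩ Y ⁻¹' {t} ∩ Z ⁻¹' {u}) * μ (Z ⁻¹' {u}) =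
      μ (X ⁻¹' {s} ∩ Z ⁻¹' {u}) * μ (Y ⁻¹' {t} ∩ Z ⁻¹' {u})

/-- `U` is uniformly distributed on the finite type `G` under `μ`. -/
def IsUniformRV {Ω : Type*} [MeasurableSpace Ω] (μ : Measure Ω)
    {G : Type*} [Fintype G] (U : Ω → G) : Prop :=
  ∀ g : G, μ (U ⁻¹' {g}) = (Fintype.card G : ENNReal)⁻¹


/-!
Every quantity is a linear combination of joint entropies, and
`I(A;X|Y) ≤ I(A;X|Y) + I(X;Y) = I(X;A,Y) ≤ I(X;A,B,Y) = I(X;A,B) + I(X;Y|A,B) = I(X;A,B)`,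
the last step by (ii). By (i), `I(A;B) = I(A;B,X) = 0`, which turns `I(X;A,B)` into `I(X;B) ≤ ε`.
So the proof only needs nonnegativity of conditional mutual information, which follows from
`log x ≥ 1 - 1/x` applied termwise to `I(X;Y|Z) = ∑ p(x,y,z) log (p(x,y,z) p(z) / (p(x,z) p(y,z)))`,
and its vanishing under conditional independence.
-/

open Real

section Entropy

variable {Ω : Type*} [MeasurableSpace Ω] {μ : Measure Ω}

lemma finEntropy_comp_of_injective {S T : Type*} [Fintype S] [Fintype T] (X : Ω → S)
    {f : S → T} (hf : Function.Injective f) :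
    finEntropy μ (fun ω => f (X ω)) = finEntropy μ X := by
  refine (Fintype.sum_of_injective f hf _ _ (fun t ht => ?_) (fun s => ?_)).symm
  · have : (fun ω => f (X ω)) ⁻¹' {t} = ∅ :=
      Set.eq_empty_of_forall_notMem fun ω h => ht ⟨X ω, h⟩
    simp [this]
  · congr 3
    ext ω
    simp [hf.eq_iff]

lemma finEntropy_const [IsProbabilityMeasure μ] : finEntropy μ (fun _ : Ω => ()) = 0 := by
  simp [finEntropy]

lemma finEntropy_eq_sum {S : Type*} [Fintype S] (X : Ω → S) :
    finEntropy μ X = ∑ s, negMulLog (μ.real (X ⁻¹' {s})) := rfl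

lemma finEntropy_pair {S T : Type*} [Fintype S] [Fintype T] (X : Ω → S) (Y : Ω → T) :
    finEntropy μ (fun ω => (X ω, Y ω))
      = ∑ s, ∑ t, negMulLog (μ.real (X ⁻¹' {s} ∩ Y ⁻¹' {t})) := by
  simp only [finEntropy, Fintype.sum_prod_type, ← Set.singleton_prod_singleton,
    Set.mk_preimage_prod, measureReal_def]

lemma finEntropy_triple {S T U : Type*} [Fintype S] [Fintype T] [Fintype U]
    (X : Ω → S) (Y : Ω → T) (Z : Ω → U) :
    finEntropy μ (fun ω => (X ω, Y ω, Z ω))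
      = ∑ s, ∑ t, ∑ r, negMulLog (μ.real (X ⁻¹' {s} ∩ Y ⁻¹' {t} ∩ Z ⁻¹' {r})) := by
  simp only [finEntropy_pair, Fintype.sum_prod_type, ← Set.singleton_prod_singleton,
    Set.mk_preimage_prod, Set.inter_assoc]

lemma sum_measureReal_inter_preimage_singleton [IsFiniteMeasure μ] {T : Type*} [Fintype T]
    [MeasurableSpace T] [MeasurableSingletonClass T] {Y : Ω → T} (hY : Measurable Y)
    (E : Set Ω) : ∑ t, μ.real (E ∩ Y ⁻¹' {t}) = μ.real E := by
  calc ∑ t, μ.real (E ∩ Y ⁻¹' {t}) = ∑ t, (μ.restrict E).real (Y ⁻¹' {t}) := by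
        simp only [measureReal_restrict_apply (hY (measurableSet_singleton _)), Set.inter_comm]
    _ = (μ.restrict E).real (Y ⁻¹' (Finset.univ : Finset T)) :=
        sum_measureReal_preimage_singleton (μ := μ.restrict E) Finset.univ
          fun t _ => hY (measurableSet_singleton t)
    _ = μ.real E := by simp

lemma finCondMutualInfo_const [IsProbabilityMeasure μ] {S T : Type*} [Fintype S] [Fintype T]
    (X : Ω → S) (Y : Ω → T) : finCondMutualInfo μ X Y (fun _ => ()) = finMutualInfo μ X Y := by
  have hX : finEntropy μ (fun ω => (X ω, ())) = finEntropy μ X :=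
    finEntropy_comp_of_injective X (f := fun s => (s, ())) fun _ _ h => congrArg Prod.fst h
  have hY : finEntropy μ (fun ω => (Y ω, ())) = finEntropy μ Y :=
    finEntropy_comp_of_injective Y (f := fun t => (t, ())) fun _ _ h => congrArg Prod.fst h
  have hXY : finEntropy μ (fun ω => (X ω, Y ω, ())) = finEntropy μ (fun ω => (X ω, Y ω)) :=
    finEntropy_comp_of_injective (fun ω => (X ω, Y ω)) (f := fun p => (p.1, p.2, ()))
      fun p q h => by simpa [Prod.ext_iff] using h
  rw [finCondMutualInfo, hX, hY, hXY, finEntropy_const, finMutualInfo, sub_zero]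

end Entropy

noncomputable def condMutualInfoTerm (q a b c : ℝ) : ℝ := q * (log q + log c - log a - log b)

lemma sub_div_le_condMutualInfoTerm {q a b c : ℝ} (hq : 0 ≤ q) (hqa : q ≤ a) (hqb : q ≤ b)
    (hac : a ≤ c) : q - a * b / c ≤ condMutualInfoTerm q a b c := by
  rcases hq.eq_or_lt with rfl | hq
  · simp only [condMutualInfoTerm, zero_mul, zero_sub, neg_nonpos]
    exact div_nonneg (mul_nonneg hqa hqb) (hqa.trans hac)
  have ha : 0 < a := hq.trans_le hqa
  have hb : 0 < b := hq.trans_le hqb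
  have hc : 0 < c := ha.trans_le hac
  have key := one_sub_inv_le_log_of_pos (x := q * c / (a * b)) (by positivity)
  rw [log_div (by positivity) (by positivity), log_mul hq.ne' hc.ne', log_mul ha.ne' hb.ne',
    inv_div] at key
  calc q - a * b / c = q * (1 - a * b / (q * c)) := by field_simp
    _ ≤ q * (log q + log c - (log a + log b)) := mul_le_mul_of_nonneg_left key hq.le
    _ = condMutualInfoTerm q a b c := by rw [condMutualInfoTerm]; ring

lemma condMutualInfoTerm_eq_zero {q a b c : ℝ} (hq : 0 ≤ q) (hqa : q ≤ a) (hqb : q ≤ b)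
    (h : q * c = a * b) : condMutualInfoTerm q a b c = 0 := by
  rcases hq.eq_or_lt with rfl | hq
  · simp [condMutualInfoTerm]
  have ha : 0 < a := hq.trans_le hqa
  have hb : 0 < b := hq.trans_le hqb
  have hc : c ≠ 0 := by
    rintro rfl
    exact (mul_pos ha hb).ne' (by simpa using h.symm)
  rw [condMutualInfoTerm, ← log_mul hq.ne' hc, h, log_mul ha.ne' hb.ne']
  ring

lemma negMulLog_eq_neg_sum_mul_log {ι : Type*} [Fintype ι] {q : ι → ℝ} {a : ℝ}
    (h : ∑ i, q i = a) : negMulLog a = -∑ i, q i * log a := by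
  rw [negMulLog, ← Finset.sum_mul, h, neg_mul]

section CondMutualInfo

variable {Ω S T U : Type*} [MeasurableSpace Ω] {μ : Measure Ω} [IsFiniteMeasure μ]
  [Fintype S] [MeasurableSpace S] [MeasurableSingletonClass S]
  [Fintype T] [MeasurableSpace T] [MeasurableSingletonClass T] [Fintype U]
  {X : Ω → S} {Y : Ω → T} (Z : Ω → U)

lemma finCondMutualInfo_eq_sum (hX : Measurable X) (hY : Measurable Y) :
    finCondMutualInfo μ X Y Z = ∑ r, ∑ s, ∑ t,
      condMutualInfoTerm (μ.real (X ⁻¹' {s} ∩ Y ⁻¹' {t} ∩ Z ⁻¹' {r}))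
        (μ.real (X ⁻¹' {s} ∩ Z ⁻¹' {r})) (μ.real (Y ⁻¹' {t} ∩ Z ⁻¹' {r}))
        (μ.real (Z ⁻¹' {r})) := by
  rw [finCondMutualInfo, finEntropy_pair, finEntropy_pair, finEntropy_triple, finEntropy_eq_sum]
  set m : S → T → U → ℝ := fun s t r => μ.real (X ⁻¹' {s} ∩ Y ⁻¹' {t} ∩ Z ⁻¹' {r})
  have hXZ : ∀ s r, ∑ t, m s t r = μ.real (X ⁻¹' {s} ∩ Z ⁻¹' {r}) := fun s r => by
    simp only [m, Set.inter_right_comm _ (Y ⁻¹' _)]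
    exact sum_measureReal_inter_preimage_singleton (μ := μ) hY _
  have hYZ : ∀ t r, ∑ s, m s t r = μ.real (Y ⁻¹' {t} ∩ Z ⁻¹' {r}) := fun t r => by
    simp only [m, Set.inter_assoc, Set.inter_comm (X ⁻¹' _)]
    simp only [← Set.inter_assoc]
    exact sum_measureReal_inter_preimage_singleton (μ := μ) hX _
  have hZ : ∀ r, ∑ s, ∑ t, m s t r = μ.real (Z ⁻¹' {r}) := fun r => by
    simp only [hXZ, Set.inter_comm (X ⁻¹' _)]
    exact sum_measureReal_inter_preimage_singleton (μ := μ) hX _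
  have eXZ : ∑ s, ∑ r, negMulLog (μ.real (X ⁻¹' {s} ∩ Z ⁻¹' {r}))
      = -∑ r, ∑ s, ∑ t, m s t r * log (μ.real (X ⁻¹' {s} ∩ Z ⁻¹' {r})) := by
    simp only [fun s r => negMulLog_eq_neg_sum_mul_log (hXZ s r), Finset.sum_neg_distrib]
    exact congrArg Neg.neg Finset.sum_comm
  have eYZ : ∑ t, ∑ r, negMulLog (μ.real (Y ⁻¹' {t} ∩ Z ⁻¹' {r}))
      = -∑ r, ∑ s, ∑ t, m s t r * log (μ.real (Y ⁻¹' {t} ∩ Z ⁻¹' {r})) := by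
    simp only [fun t r => negMulLog_eq_neg_sum_mul_log (hYZ t r), Finset.sum_neg_distrib]
    exact congrArg Neg.neg
      (Finset.sum_comm.trans (Finset.sum_congr rfl fun _ _ => Finset.sum_comm))
  have eZ : ∑ r, negMulLog (μ.real (Z ⁻¹' {r}))
      = -∑ r, ∑ s, ∑ t, m s t r * log (μ.real (Z ⁻¹' {r})) := by
    simp only [negMulLog, ← hZ, Finset.sum_mul, neg_mul, Finset.sum_neg_distrib]
  have eXYZ : ∑ s, ∑ t, ∑ r, negMulLog (m s t r)
      = -∑ r, ∑ s, ∑ t, m s t r * log (m s t r) := by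
    simp only [negMulLog, neg_mul, Finset.sum_neg_distrib]
    exact congrArg Neg.neg
      ((Finset.sum_congr rfl fun _ _ => Finset.sum_comm).trans Finset.sum_comm)
  rw [eXZ, eYZ, eZ, eXYZ]
  simp only [condMutualInfoTerm, mul_add, mul_sub, Finset.sum_add_distrib, Finset.sum_sub_distrib]
  ring

lemma finCondMutualInfo_nonneg (hX : Measurable X) (hY : Measurable Y) :
    0 ≤ finCondMutualInfo μ X Y Z := by
  rw [finCondMutualInfo_eq_sum Z hX hY]
  refine Finset.sum_nonneg fun r _ => ?_
  have hXZ : ∑ s, μ.real (X ⁻¹' {s} ∩ Z ⁻¹' {r}) = μ.real (Z ⁻¹' {r}) := by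
    simp only [Set.inter_comm (X ⁻¹' _)]
    exact sum_measureReal_inter_preimage_singleton hX _
  have hYZ : ∑ t, μ.real (Y ⁻¹' {t} ∩ Z ⁻¹' {r}) = μ.real (Z ⁻¹' {r}) := by
    simp only [Set.inter_comm (Y ⁻¹' _)]
    exact sum_measureReal_inter_preimage_singleton hY _
  have hXYZ : ∑ s, ∑ t, μ.real (X ⁻¹' {s} ∩ Y ⁻¹' {t} ∩ Z ⁻¹' {r}) = μ.real (Z ⁻¹' {r}) := by
    simp only [Set.inter_right_comm _ (Y ⁻¹' _), sum_measureReal_inter_preimage_singleton hY, hXZ]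
  calc (0 : ℝ) = ∑ s, ∑ t, (μ.real (X ⁻¹' {s} ∩ Y ⁻¹' {t} ∩ Z ⁻¹' {r})
      - μ.real (X ⁻¹' {s} ∩ Z ⁻¹' {r}) * μ.real (Y ⁻¹' {t} ∩ Z ⁻¹' {r}) / μ.real (Z ⁻¹' {r})) := by
        simp only [Finset.sum_sub_distrib, mul_div_right_comm _ _ (μ.real (Z ⁻¹' {r})),
          ← Finset.mul_sum, ← Finset.sum_mul, ← Finset.sum_div, hXZ, hYZ, hXYZ]
        rcases eq_or_ne (μ.real (Z ⁻¹' {r})) 0 with h | h <;> simp [h]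
    _ ≤ _ := by
      gcongr with s _ t _
      exact sub_div_le_condMutualInfoTerm measureReal_nonneg
        (measureReal_mono (Set.inter_subset_inter_left _ Set.inter_subset_left))
        (measureReal_mono (Set.inter_subset_inter_left _ Set.inter_subset_right))
        (measureReal_mono Set.inter_subset_right)

lemma CondIndepFinRV.finCondMutualInfo_eq_zero (h : CondIndepFinRV μ X Y Z) (hX : Measurable X)
    (hY : Measurable Y) : finCondMutualInfo μ X Y Z = 0 := by
  rw [finCondMutualInfo_eq_sum Z hX hY]
  refine Fintype.sum_eq_zero _ fun r => Fintype.sum_eq_zero _ fun s =>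
    Fintype.sum_eq_zero _ fun t => condMutualInfoTerm_eq_zero measureReal_nonneg
      (measureReal_mono (Set.inter_subset_inter_left _ Set.inter_subset_left))
      (measureReal_mono (Set.inter_subset_inter_left _ Set.inter_subset_right)) ?_
  simp only [measureReal_def, ← ENNReal.toReal_mul, h s t r]

end CondMutualInfo

lemma ProbabilityTheory.IndepFun.condIndepFinRV_const {Ω S T : Type*} [MeasurableSpace Ω]
    {μ : Measure Ω} [IsProbabilityMeasure μ] [MeasurableSpace S] [MeasurableSingletonClass S]
    [MeasurableSpace T] [MeasurableSingletonClass T] {X : Ω → S} {Y : Ω → T}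
    (h : IndepFun X Y μ) : CondIndepFinRV μ X Y (fun _ : Ω => ()) := by
  intro s t u
  simp only [Set.preimage_const_of_mem (Set.mem_singleton u), Set.inter_univ, measure_univ,
    mul_one]
  exact h.measure_inter_preimage_eq_mul _ _ (measurableSet_singleton s) (measurableSet_singleton t)

section MutualInfo

variable {Ω S T : Type*} [MeasurableSpace Ω] {μ : Measure Ω} [IsProbabilityMeasure μ]
  [Fintype S] [MeasurableSpace S] [MeasurableSingletonClass S]
  [Fintype T] [MeasurableSpace T] [MeasurableSingletonClass T] {X : Ω → S} {Y : Ω → T}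

lemma finMutualInfo_nonneg (hX : Measurable X) (hY : Measurable Y) :
    0 ≤ finMutualInfo μ X Y := by
  rw [← finCondMutualInfo_const]
  exact finCondMutualInfo_nonneg _ hX hY

lemma ProbabilityTheory.IndepFun.finMutualInfo_eq_zero (h : IndepFun X Y μ) (hX : Measurable X)
    (hY : Measurable Y) : finMutualInfo μ X Y = 0 := by
  rw [← finCondMutualInfo_const]
  exact h.condIndepFinRV_const.finCondMutualInfo_eq_zero _ hX hY

end MutualInfo

theorem stmt13_general {Ω SA SB SX SY : Type*} [MeasurableSpace Ω]
    [Fintype SA] [MeasurableSpace SA] [MeasurableSingletonClass SA]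
    [Fintype SB] [MeasurableSpace SB] [MeasurableSingletonClass SB]
    [Fintype SX] [MeasurableSpace SX] [MeasurableSingletonClass SX]
    [Fintype SY] [MeasurableSpace SY] [MeasurableSingletonClass SY]
    (μ : Measure Ω) [IsProbabilityMeasure μ]
    (A : Ω → SA) (B : Ω → SB) (X : Ω → SX) (Y : Ω → SY)
    (hA : Measurable A) (hB : Measurable B) (hX : Measurable X) (hY : Measurable Y)
    (ε : ℝ)
    (h1 : IndepFun A (fun ω => (B ω, X ω)) μ)
    (h2 : CondIndepFinRV μ X Y (fun ω => (A ω, B ω)))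
    (h3 : finMutualInfo μ B X ≤ ε) :
    finCondMutualInfo μ A X Y ≤ ε := by
  have hAB : finMutualInfo μ A B = 0 :=
    (h1.comp measurable_id measurable_fst).finMutualInfo_eq_zero hA hB
  have hABX : finMutualInfo μ A (fun ω => (B ω, X ω)) = 0 :=
    h1.finMutualInfo_eq_zero hA (hB.prodMk hX)
  have hXY_AB : finCondMutualInfo μ X Y (fun ω => (A ω, B ω)) = 0 :=
    h2.finCondMutualInfo_eq_zero _ hX hY
  have hBX_AY : 0 ≤ finCondMutualInfo μ B X (fun ω => (A ω, Y ω)) :=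
    finCondMutualInfo_nonneg _ hB hX
  have hXY : 0 ≤ finMutualInfo μ X Y := finMutualInfo_nonneg hX hY
  have e1 : finEntropy μ (fun ω => (B ω, A ω, Y ω)) = finEntropy μ (fun ω => (Y ω, A ω, B ω)) :=
    finEntropy_comp_of_injective (fun ω => (Y ω, A ω, B ω)) (f := fun p => (p.2.2, p.2.1, p.1))
      fun p q h => by simp_all [Prod.ext_iff]
  have e2 : finEntropy μ (fun ω => (X ω, A ω, Y ω)) = finEntropy μ (fun ω => (A ω, X ω, Y ω)) :=
    finEntropy_comp_of_injective (fun ω => (A ω, X ω, Y ω)) (f := fun p => (p.2.1, p.1, p.2.2))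
      fun p q h => by simp_all [Prod.ext_iff]
  have e3 : finEntropy μ (fun ω => (B ω, X ω, A ω, Y ω))
      = finEntropy μ (fun ω => (X ω, Y ω, A ω, B ω)) :=
    finEntropy_comp_of_injective (fun ω => (X ω, Y ω, A ω, B ω))
      (f := fun p => (p.2.2.2, p.1, p.2.2.1, p.2.1)) fun p q h => by simp_all [Prod.ext_iff]
  have e4 : finEntropy μ (fun ω => (X ω, A ω, B ω)) = finEntropy μ (fun ω => (A ω, B ω, X ω)) :=
    finEntropy_comp_of_injective (fun ω => (A ω, B ω, X ω)) (f := fun p => (p.2.2, p.1, p.2.1))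
      fun p q h => by simp_all [Prod.ext_iff]
  simp only [finMutualInfo, finCondMutualInfo] at *
  linarith

/-- If `A ⊥ (B, X)`, `X ⊥ Y | (A, B)`, and `I(B ; X) ≤ ε`,
then `I(A ; X | Y) ≤ ε`. -/
theorem stmt13 {Ω SA SB SX SY : Type*} [MeasurableSpace Ω]
    [Fintype SA] [Nonempty SA] [MeasurableSpace SA] [MeasurableSingletonClass SA]
    [Fintype SB] [Nonempty SB] [MeasurableSpace SB] [MeasurableSingletonClass SB]
    [Fintype SX] [Nonempty SX] [MeasurableSpace SX] [MeasurableSingletonClass SX]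
    [Fintype SY] [Nonempty SY] [MeasurableSpace SY] [MeasurableSingletonClass SY]
    (μ : Measure Ω) [IsProbabilityMeasure μ]
    (A : Ω → SA) (B : Ω → SB) (X : Ω → SX) (Y : Ω → SY)
    (hA : Measurable A) (hB : Measurable B) (hX : Measurable X) (hY : Measurable Y)
    (ε : ℝ) (hε : 0 ≤ ε)
    (h1 : IndepFun A (fun ω => (B ω, X ω)) μ)
    (h2 : CondIndepFinRV μ X Y (fun ω => (A ω, B ω)))
    (h3 : finMutualInfo μ B X ≤ ε) :
    finCondMutualInfo μ A X Y ≤ ε :=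
  stmt13_general μ A B X Y hA hB hX hY ε h1 h2 h3
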